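/- Let a, b, z be real numbers, let c, y > 0, let λ > 1, and suppose y - λz > 0. Then for every ε ∈ (0,1): (y - z)² - a√y·(y - λz) - b·y - c·√y ≥ (y - λz)²/λ² - a²λ²(y - λz)/(8(λ-1)) - λ²b²/(4(1-ε)(λ-1)²) - (3/4)·c^{4/3}·(λ²/(4ε(λ-1)²))^{1/3}. -/

import Mathlib

theorem stmt_1 (a b z c y lam ε : ℝ) (hc : 0 < c) (hy : 0 < y)
    (hlam : 1 < lam) (hyz : 0 < y - lam * z) (hε : ε ∈ Set.Ioo (0 : ℝ) 1) :
    (y - z) ^ 2 - a * Real.sqrt y * (y - lam * z) - b * y - c * Real.sqrt y ≥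
      (y - lam * z) ^ 2 / lam ^ 2 - a ^ 2 * lam ^ 2 * (y - lam * z) / (8 * (lam - 1))
        - lam ^ 2 * b ^ 2 / (4 * (1 - ε) * (lam - 1) ^ 2)
        - (3 / 4) * c ^ ((4 : ℝ) / 3) * (lam ^ 2 / (4 * ε * (lam - 1) ^ 2)) ^ ((1 : ℝ) / 3) := by
  obtain ⟨hε0, hε1⟩ := hε
  have hl0 : (0:ℝ) < lam - 1 := by linarith
  have hlam0 : (0:ℝ) < lam := by linarith
  have hεm : (0:ℝ) < 1 - ε := by linarith
  set s := Real.sqrt y with hsdef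
  have hs2 : s ^ 2 = y := Real.sq_sqrt hy.le
  have hspos : 0 < s := Real.sqrt_pos.2 hy
  have hApos : 0 < lam ^ 2 / (4 * ε * (lam - 1) ^ 2) := by positivity
  set T := (lam ^ 2 / (4 * ε * (lam - 1) ^ 2)) ^ ((1:ℝ)/3) with hTdef
  have hT : 0 < T := Real.rpow_pos_of_pos hApos _
  have hT3 : T ^ 3 = lam ^ 2 / (4 * ε * (lam - 1) ^ 2) := by
    rw [hTdef, ← Real.rpow_natCast (_ ^ ((1:ℝ)/3)) 3, ← Real.rpow_mul hApos.le]
    norm_num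
  set C := c ^ ((4:ℝ)/3) with hCdef
  have hC : 0 < C := Real.rpow_pos_of_pos hc _
  have hC3 : C ^ 3 = c ^ 4 := by
    rw [hCdef, ← Real.rpow_natCast (c ^ ((4:ℝ)/3)) 3, ← Real.rpow_mul hc.le]
    norm_num
  obtain ⟨u, hu, hu3, hu4⟩ : ∃ u : ℝ, 0 < u ∧ u ^ 3 = c * T ^ 3 ∧ u ^ 4 = C * T ^ 4 := by
    refine ⟨C * T / c, by positivity, ?_, ?_⟩
    · field_simp; linear_combination hC3
    · field_simp; linear_combination hC3
  -- Piece 1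
  have hP1 : 0 ≤ (y - lam * z) * (2 * (lam - 1) * y / lam ^ 2 - a * s + a ^ 2 * lam ^ 2 / (8 * (lam - 1))) := by
    apply mul_nonneg hyz.le
    have h1 : 2 * (lam - 1) * y / lam ^ 2 - a * s + a ^ 2 * lam ^ 2 / (8 * (lam - 1))
        = (4 * (lam - 1) * s - a * lam ^ 2) ^ 2 / (8 * (lam - 1) * lam ^ 2) := by
      rw [← hs2]; field_simp; ring
    rw [h1]; positivity
  -- Piece 2
  have hP2 : 0 ≤ (1 - ε) * (lam - 1) ^ 2 * y ^ 2 / lam ^ 2 - b * y + lam ^ 2 * b ^ 2 / (4 * (1 - ε) * (lam - 1) ^ 2) := by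
    have h2 : (1 - ε) * (lam - 1) ^ 2 * y ^ 2 / lam ^ 2 - b * y + lam ^ 2 * b ^ 2 / (4 * (1 - ε) * (lam - 1) ^ 2)
        = (2 * (1 - ε) * (lam - 1) ^ 2 * y - b * lam ^ 2) ^ 2 / (4 * (1 - ε) * (lam - 1) ^ 2 * lam ^ 2) := by
      field_simp; ring
    rw [h2]; positivity
  -- Piece 3
  have hP3 : 0 ≤ ε * (lam - 1) ^ 2 * y ^ 2 / lam ^ 2 - c * s + (3/4) * C * T := by
    have hT3' : 4 * ε * (lam - 1) ^ 2 * T ^ 3 = lam ^ 2 := by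
      rw [hT3]; field_simp
    have hquart : 0 ≤ s ^ 4 - 4 * s * u ^ 3 + 3 * u ^ 4 := by
      nlinarith [mul_nonneg (sq_nonneg (s - u)) (by positivity : (0:ℝ) ≤ s ^ 2 + 2 * s * u + 3 * u ^ 2)]
    have hquart' : 0 ≤ s ^ 4 - 4 * s * (c * T ^ 3) + 3 * (C * T ^ 4) := by
      rw [← hu3, ← hu4]; exact hquart
    have key3 : ε * (lam - 1) ^ 2 * y ^ 2 / lam ^ 2 - c * s + (3/4) * C * T
        = (s ^ 4 - 4 * s * (c * T ^ 3) + 3 * (C * T ^ 4)) / (4 * T ^ 3) := by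
      rw [← hs2]
      field_simp
      linear_combination s ^ 4 * hT3'
    rw [key3]
    exact div_nonneg hquart' (by positivity)
  have main : (y - z) ^ 2 - a * s * (y - lam * z) - b * y - c * s
      - ((y - lam * z) ^ 2 / lam ^ 2 - a ^ 2 * lam ^ 2 * (y - lam * z) / (8 * (lam - 1))
        - lam ^ 2 * b ^ 2 / (4 * (1 - ε) * (lam - 1) ^ 2) - (3/4) * C * T)
      = (y - lam * z) * (2 * (lam - 1) * y / lam ^ 2 - a * s + a ^ 2 * lam ^ 2 / (8 * (lam - 1)))
        + ((1 - ε) * (lam - 1) ^ 2 * y ^ 2 / lam ^ 2 - b * y + lam ^ 2 * b ^ 2 / (4 * (1 - ε) * (lam - 1) ^ 2))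
        + (ε * (lam - 1) ^ 2 * y ^ 2 / lam ^ 2 - c * s + (3/4) * C * T) := by
    field_simp
    ring
  linarith [hP1, hP2, hP3, main]
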